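/- arXiv:1507.03191 — 2 statements merged into one kernel-verified Lean document; each statement's English description precedes it below -/
import Mathlib

section
/- For |a| < 1, the function f(x) = (2/π)·√(1−x²)/((1+a²) − 2ax) on [−1,1] is a probability density, i.e., ∫_{-1}^{1} f(x) dx = 1. -/
/-!
Substituting `x = cos θ` turns the integral into `(2/π) ∫₀^π sin²θ / (1 + a² - 2a cos θ) dθ`.
Writing `4a² sin²θ` as a polynomial in the denominator `D` gives
`4a² sin²θ / D = (1 + a²) + 2a cos θ - (1 - a²)² / D`, and `1 / D` has the antiderivative
`(θ + 2 arctan (a sin θ / (1 - a cos θ))) / (1 - a²)`, which, unlike the usual `tan (θ/2)`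
substitution, is smooth on all of `[0, π]` when `|a| < 1`. Its values at the endpoints give
`4a² · ∫₀^π sin²θ / D = 2a²π`.
-/

open Real intervalIntegral

lemma one_add_sq_sub_two_mul_cos_pos {a θ : ℝ} (h : a * cos θ ≠ 1) :
    0 < 1 + a ^ 2 - 2 * a * cos θ := by
  have : 0 < (1 - a * cos θ) ^ 2 := by positivity
  nlinarith [sin_sq_add_cos_sq θ, sq_nonneg (a * sin θ)]

theorem integral_neg_one_one_eq_integral_comp_cos_mul_sin (g : ℝ → ℝ) :
    ∫ x in (-1 : ℝ)..1, g x = ∫ θ in (0 : ℝ)..π, g (cos θ) * sin θ := by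
  have h := integral_comp_mul_deriv_of_deriv_nonpos (g := g) (a := 0) (b := π)
    continuousOn_cos (fun θ _ => hasDerivAt_cos θ) fun θ hθ => by
      rw [min_eq_left pi_pos.le, max_eq_right pi_pos.le] at hθ
      exact neg_nonpos.2 (sin_pos_of_pos_of_lt_pi hθ.1 hθ.2).le
  rw [cos_zero, cos_pi, integral_symm (-1) 1] at h
  simpa only [Function.comp_apply, mul_neg, intervalIntegral.integral_neg, neg_inj] using h.symm

lemma hasDerivAt_arctan_mul_sin_div {a θ : ℝ} (h : a * cos θ ≠ 1) :
    HasDerivAt (fun θ => arctan (a * sin θ / (1 - a * cos θ)))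
      ((a * cos θ - a ^ 2) / (1 + a ^ 2 - 2 * a * cos θ)) θ := by
  have hden : 1 - a * cos θ ≠ 0 := sub_ne_zero.2 h.symm
  have hsum : (1 - a * cos θ) ^ 2 + (a * sin θ) ^ 2 = 1 + a ^ 2 - 2 * a * cos θ := by
    linear_combination a ^ 2 * sin_sq_add_cos_sq θ
  have hquot : HasDerivAt (fun θ => a * sin θ / (1 - a * cos θ))
      ((a * cos θ * (1 - a * cos θ) - a * sin θ * -(a * -sin θ)) / (1 - a * cos θ) ^ 2) θ :=
    ((hasDerivAt_sin θ).const_mul a).div (((hasDerivAt_cos θ).const_mul a).const_sub 1) hden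
  convert hquot.arctan using 1
  rw [← hsum]
  field_simp
  linear_combination a ^ 2 * sin_sq_add_cos_sq θ

lemma hasDerivAt_four_sq_mul_sin_sq_div {a θ : ℝ} (h : a * cos θ ≠ 1) :
    HasDerivAt (fun θ => 2 * a ^ 2 * θ - 2 * (1 - a ^ 2) * arctan (a * sin θ / (1 - a * cos θ))
        + 2 * a * sin θ)
      (4 * a ^ 2 * (sin θ ^ 2 / (1 + a ^ 2 - 2 * a * cos θ))) θ := by
  have hD := (one_add_sq_sub_two_mul_cos_pos h).ne'
  refine ((((hasDerivAt_id θ).const_mul (2 * a ^ 2)).sub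
    ((hasDerivAt_arctan_mul_sin_div h).const_mul (2 * (1 - a ^ 2)))).add
    ((hasDerivAt_sin θ).const_mul (2 * a))).congr_deriv ?_
  field_simp
  linear_combination (-4 * a ^ 2) * sin_sq_add_cos_sq θ

theorem integral_sin_sq_div_one_add_sq_sub_two_mul_cos {a : ℝ} (ha : |a| < 1) :
    ∫ θ in (0 : ℝ)..π, sin θ ^ 2 / (1 + a ^ 2 - 2 * a * cos θ) = π / 2 := by
  rcases eq_or_ne a 0 with rfl | ha0
  · simp [integral_sin_sq]
  have hac (θ : ℝ) : a * cos θ ≠ 1 := by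
    have : |a * cos θ| < 1 := by
      rw [abs_mul]
      exact mul_lt_one_of_nonneg_of_lt_one_left (abs_nonneg a) ha (abs_cos_le_one θ)
    exact (lt_of_abs_lt this).ne
  have hcont : Continuous fun θ => sin θ ^ 2 / (1 + a ^ 2 - 2 * a * cos θ) :=
    by fun_prop (disch := exact fun θ => (one_add_sq_sub_two_mul_cos_pos (hac θ)).ne')
  have hscaled : 4 * a ^ 2 * ∫ θ in (0 : ℝ)..π, sin θ ^ 2 / (1 + a ^ 2 - 2 * a * cos θ)
      = 4 * a ^ 2 * (π / 2) := by
    rw [← integral_const_mul, integral_eq_sub_of_hasDerivAt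
      (fun θ _ => hasDerivAt_four_sq_mul_sin_sq_div (hac θ))
      ((continuous_const.mul hcont).intervalIntegrable _ _)]
    simp only [sin_pi, mul_zero, cos_pi, mul_neg, mul_one, sub_neg_eq_add, zero_div, arctan_zero,
      sub_zero, add_zero, sin_zero, cos_zero, sub_self]
    ring
  exact mul_left_cancel₀ (by positivity) hscaled

theorem fK1_is_density (a : ℝ) (ha : |a| < 1) :
    ∫ x in (-1 : ℝ)..1,
        (2 / Real.pi) * Real.sqrt (1 - x ^ 2) / ((1 + a ^ 2) - 2 * a * x) = 1 := by
  simp_rw [mul_div_assoc]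
  rw [integral_const_mul, integral_neg_one_one_eq_integral_comp_cos_mul_sin,
    integral_congr fun θ hθ => ?_, integral_sin_sq_div_one_add_sq_sub_two_mul_cos ha]
  · field_simp
  rw [Set.uIcc_of_le pi_pos.le] at hθ
  rw [← sin_eq_sqrt_one_sub_cos_sq hθ.1 hθ.2]
  ring
end

section
/- With w(x,y|ρ) = (1−ρ²)² − 4xyρ(1+ρ²) + 4ρ²(x²+y²) and f(x|y,ρ) = (2/π)(1−ρ²)√(1−x²)/w(x,y|ρ), for |ρ| < 1 and x ∈ [−1,1]: ∫_{-1}^{1} f(x|y,ρ)·(2/π)√(1−y²) dy = (2/π)√(1−x²). (The semicircle law is invariant for the kernel f.) -/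
/-!
Write `x = cos α` and `y = cos β`. The denominator factors as
`w = (1 - 2ρ cos (α - β) + ρ²)(1 - 2ρ cos (α + β) + ρ²)`, and summing the geometric series
`∑ ρⁿ e^{i(n+1)γ}` at `γ = α ∓ β` gives the expansion
`(1 - ρ²) sin α sin β / w = ∑ ρⁿ sin ((n+1)α) sin ((n+1)β)`,
i.e. the kernel in terms of Chebyshev polynomials of the second kind, since
`sin ((n+1) arccos y) = √(1 - y²) Uₙ(y)`. The series is dominated by `∑ |ρ|ⁿ`, so it may
be integrated termwise, and after substituting `y = cos θ` orthogonality,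
`∫₀^π sin θ sin ((n+1)θ) dθ = 0` for `n ≥ 1`, leaves only the term `n = 0`.
-/

open Real

lemma one_sub_two_mul_mul_add_sq_pos {ρ c : ℝ} (hρ : |ρ| < 1) (hc : |c| ≤ 1) :
    0 < 1 - 2 * ρ * c + ρ ^ 2 := by
  have hρc : ρ * c ≤ |ρ| := by
    calc ρ * c ≤ |ρ| * |c| := (le_abs_self _).trans (abs_mul ρ c).le
      _ ≤ |ρ| := mul_le_of_le_one_right (abs_nonneg ρ) hc
  nlinarith [sq_abs ρ, abs_nonneg ρ]

lemma hasSum_pow_mul_cos_succ_mul {ρ : ℝ} (hρ : |ρ| < 1) (γ : ℝ) :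
    HasSum (fun n : ℕ => ρ ^ n * cos ((n + 1) * γ))
      ((cos γ - ρ) / (1 - 2 * ρ * cos γ + ρ ^ 2)) := by
  set u : ℂ := Complex.exp (γ * Complex.I)
  have hz : ‖(ρ : ℂ) * u‖ < 1 := by simpa [u] using hρ
  have hgeom := Complex.hasSum_re ((hasSum_geometric_of_norm_lt_one hz).mul_left u)
  have hterm (n : ℕ) : (u * (ρ * u) ^ n).re = ρ ^ n * cos ((n + 1) * γ) := by
    have hexp : u * (ρ * u) ^ n
        = ((ρ ^ n : ℝ) : ℂ) * Complex.exp (((n + 1) * γ : ℝ) * Complex.I) := by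
      rw [mul_pow, ← Complex.exp_nat_mul, mul_left_comm, ← Complex.exp_add]
      push_cast
      ring_nf
    rw [hexp, Complex.re_ofReal_mul, Complex.exp_ofReal_mul_I_re]
  have hsum : (u * (1 - ρ * u)⁻¹).re = (cos γ - ρ) / (1 - 2 * ρ * cos γ + ρ ^ 2) := by
    have hpyth := sin_sq_add_cos_sq γ
    rw [← div_eq_mul_inv, Complex.div_re]
    simp only [Complex.normSq_apply, Complex.sub_re, Complex.sub_im, Complex.one_re,
      Complex.one_im, u, Complex.re_ofReal_mul, Complex.im_ofReal_mul,
      Complex.exp_ofReal_mul_I_re, Complex.exp_ofReal_mul_I_im]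
    rw [← add_div]
    congr 1
    · linear_combination (-ρ) * hpyth
    · linear_combination ρ ^ 2 * hpyth
  simpa only [hterm, hsum] using hgeom

lemma hasSum_pow_mul_sin_succ_mul_mul_sin_succ_mul {ρ : ℝ} (hρ : |ρ| < 1) (α β : ℝ) :
    HasSum (fun n : ℕ => ρ ^ n * (sin ((n + 1) * α) * sin ((n + 1) * β)))
      ((1 - ρ ^ 2) * (sin α * sin β) /
        ((1 - 2 * ρ * cos (α - β) + ρ ^ 2) * (1 - 2 * ρ * cos (α + β) + ρ ^ 2))) := by
  have hdiff := ((hasSum_pow_mul_cos_succ_mul hρ (α - β)).sub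
    (hasSum_pow_mul_cos_succ_mul hρ (α + β))).div_const 2
  have hterm (n : ℕ) :
      (ρ ^ n * cos ((n + 1) * (α - β)) - ρ ^ n * cos ((n + 1) * (α + β))) / 2
        = ρ ^ n * (sin ((n + 1) * α) * sin ((n + 1) * β)) := by
    rw [mul_sub, mul_add, cos_sub, cos_add]
    ring
  have hd₁ := (one_sub_two_mul_mul_add_sq_pos hρ (abs_cos_le_one (α - β))).ne'
  have hd₂ := (one_sub_two_mul_mul_add_sq_pos hρ (abs_cos_le_one (α + β))).ne'
  have hvalue : (1 - ρ ^ 2) * (sin α * sin β) /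
        ((1 - 2 * ρ * cos (α - β) + ρ ^ 2) * (1 - 2 * ρ * cos (α + β) + ρ ^ 2))
      = ((cos (α - β) - ρ) / (1 - 2 * ρ * cos (α - β) + ρ ^ 2)
          - (cos (α + β) - ρ) / (1 - 2 * ρ * cos (α + β) + ρ ^ 2)) / 2 := by
    rw [div_sub_div _ _ hd₁ hd₂, div_div, div_eq_div_iff (by positivity) (by positivity)]
    simp only [cos_sub, cos_add]
    ring
  simpa only [hterm, hvalue] using hdiff

lemma hasSum_pow_mul_sin_succ_mul_arccos_mul_sin_succ_mul_arccos {ρ x y : ℝ} (hρ : |ρ| < 1)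
    (hx : x ∈ Set.Icc (-1 : ℝ) 1) (hy : y ∈ Set.Icc (-1 : ℝ) 1) :
    HasSum (fun n : ℕ => ρ ^ n * (sin ((n + 1) * arccos x) * sin ((n + 1) * arccos y)))
      ((1 - ρ ^ 2) * (√(1 - x ^ 2) * √(1 - y ^ 2)) /
        ((1 - ρ ^ 2) ^ 2 - 4 * x * y * ρ * (1 + ρ ^ 2) + 4 * ρ ^ 2 * (x ^ 2 + y ^ 2))) := by
  have hdenom (α β : ℝ) :
      (1 - 2 * ρ * cos (α - β) + ρ ^ 2) * (1 - 2 * ρ * cos (α + β) + ρ ^ 2)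
        = (1 - ρ ^ 2) ^ 2 - 4 * cos α * cos β * ρ * (1 + ρ ^ 2)
          + 4 * ρ ^ 2 * (cos α ^ 2 + cos β ^ 2) := by
    rw [cos_sub, cos_add]
    linear_combination (-4 * ρ ^ 2 * sin β ^ 2) * sin_sq_add_cos_sq α
      + (-4 * ρ ^ 2 * (1 - cos α ^ 2)) * sin_sq_add_cos_sq β
  have h := hasSum_pow_mul_sin_succ_mul_mul_sin_succ_mul hρ (arccos x) (arccos y)
  rwa [hdenom, cos_arccos hx.1 hx.2, cos_arccos hy.1 hy.2, sin_arccos, sin_arccos] at h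

lemma integral_comp_arccos {g : ℝ → ℝ} (hg : Continuous g) :
    ∫ y in (-1 : ℝ)..1, g (arccos y) = ∫ θ in (0 : ℝ)..π, g θ * sin θ := by
  have hsubst := intervalIntegral.integral_comp_mul_deriv (a := 0) (b := π)
    (f := cos) (f' := fun θ => -sin θ) (g := fun y => g (arccos y))
    (fun θ _ => hasDerivAt_cos θ) continuous_sin.neg.continuousOn
    (hg.comp continuous_arccos)
  rw [cos_zero, cos_pi] at hsubst
  rw [intervalIntegral.integral_symm 1 (-1), ← hsubst, ← intervalIntegral.integral_neg]
  refine intervalIntegral.integral_congr fun θ hθ => ?_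
  rw [Set.uIcc_of_le pi_pos.le] at hθ
  simp only [Function.comp_apply, arccos_cos hθ.1 hθ.2]
  ring

lemma integral_cos_nat_mul_zero_pi (k : ℕ) :
    ∫ θ in (0 : ℝ)..π, cos (k * θ) = if k = 0 then π else 0 := by
  split_ifs with hk
  · simp [hk]
  · rw [intervalIntegral.integral_comp_mul_left cos (Nat.cast_ne_zero.mpr hk), integral_cos,
      sin_nat_mul_pi]
    simp

lemma integral_sin_mul_sin_nat_succ_mul (n : ℕ) :
    ∫ θ in (0 : ℝ)..π, sin θ * sin ((n + 1) * θ) = if n = 0 then π / 2 else 0 := by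
  have hprod (θ : ℝ) :
      sin θ * sin ((n + 1) * θ) = (cos (n * θ) - cos ((n + 2 : ℕ) * θ)) / 2 := by
    rw [mul_comm, eq_div_iff two_ne_zero, mul_comm, ← mul_assoc, two_mul_sin_mul_sin]
    push_cast
    ring_nf
  simp only [hprod, intervalIntegral.integral_div]
  rw [intervalIntegral.integral_sub ((by fun_prop : Continuous _).intervalIntegrable _ _)
      ((by fun_prop : Continuous _).intervalIntegrable _ _), integral_cos_nat_mul_zero_pi,
    integral_cos_nat_mul_zero_pi]
  split_ifs <;> simp_all

lemma integral_sin_nat_succ_mul_arccos (n : ℕ) :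
    ∫ y in (-1 : ℝ)..1, sin ((n + 1) * arccos y) = if n = 0 then π / 2 else 0 := by
  rw [integral_comp_arccos (g := fun θ => sin ((n + 1) * θ)) (by fun_prop),
    ← integral_sin_mul_sin_nat_succ_mul n]
  exact intervalIntegral.integral_congr fun θ _ => mul_comm _ _

lemma hasSum_mul_intervalIntegral_of_abs_le {a : ℕ → ℝ} {g : ℕ → ℝ → ℝ} {F : ℝ → ℝ}
    {s t C : ℝ} (ha : Summable fun n => |a n|) (hg : ∀ n, Continuous (g n))
    (hgC : ∀ n y, |g n y| ≤ C)
    (hF : ∀ y ∈ Set.uIcc s t, HasSum (fun n => a n * g n y) (F y)) :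
    HasSum (fun n => a n * ∫ y in s..t, g n y) (∫ y in s..t, F y) := by
  simp only [← intervalIntegral.integral_const_mul]
  refine intervalIntegral.hasSum_integral_of_dominated_convergence (fun n _ => |a n| * C)
    (fun n => ((hg n).const_smul (a n)).aestronglyMeasurable) (fun n => ?_)
    (.of_forall fun _ _ => ha.mul_right C) intervalIntegrable_const
    (.of_forall fun y hy => hF y (Set.uIoc_subset_uIcc hy))
  refine .of_forall fun y _ => ?_
  rw [Real.norm_eq_abs, abs_mul]
  exact mul_le_mul_of_nonneg_left (hgC n y) (abs_nonneg _)

theorem semicircle_invariant (ρ x : ℝ) (hρ : |ρ| < 1) (hx : x ∈ Set.Icc (-1 : ℝ) 1) :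
    ∫ y in (-1 : ℝ)..1,
        ((2 / Real.pi) * (1 - ρ ^ 2) * Real.sqrt (1 - x ^ 2) /
            ((1 - ρ ^ 2) ^ 2 - 4 * x * y * ρ * (1 + ρ ^ 2) + 4 * ρ ^ 2 * (x ^ 2 + y ^ 2))) *
          ((2 / Real.pi) * Real.sqrt (1 - y ^ 2)) =
      (2 / Real.pi) * Real.sqrt (1 - x ^ 2) := by
  have ha : Summable fun n : ℕ => |(2 / π) ^ 2 * ρ ^ n * sin ((n + 1) * arccos x)| := by
    refine .of_nonneg_of_le (fun n => abs_nonneg _) (fun n => ?_)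
      ((summable_geometric_of_lt_one (abs_nonneg ρ) hρ).mul_left ((2 / π) ^ 2))
    simp only [abs_mul, abs_pow, abs_of_nonneg (sq_nonneg (2 / π))]
    exact mul_le_of_le_one_right (by positivity) (abs_sin_le_one _)
  refine (hasSum_mul_intervalIntegral_of_abs_le ha (g := fun n y => sin ((n + 1) * arccos y))
    (by fun_prop) (fun n y => abs_sin_le_one _) fun y hy => ?_).unique ?_
  · rw [Set.uIcc_of_le (by norm_num)] at hy
    have h := (hasSum_pow_mul_sin_succ_mul_arccos_mul_sin_succ_mul_arccos hρ hx hy).mul_left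
      ((2 / π) ^ 2)
    simp only [← mul_assoc] at h
    convert h using 1
    · rfl
    · ring
  · simp only [integral_sin_nat_succ_mul_arccos]
    convert hasSum_single 0 fun n hn => ?_ using 1
    · rw [if_pos rfl, Nat.cast_zero, zero_add, one_mul, pow_zero, mul_one, sin_arccos]
      field_simp
    · rw [if_neg hn, mul_zero]
end
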